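/- Let e_1, …, e_5 be pairwise distinct complex numbers, λ_k the coefficients of 4∏_{m=1}^{5}(x−e_m), and F the associated Kleinian 2-polar for g = 2. Fix distinct indices i, j and let {p,q,r} = {1,…,5} \ {i,j}. Define p_{22} = e_i + e_j, p_{12} = −e_i e_j, and p_{11} = e_i e_j (e_p+e_q+e_r) + e_p e_q e_r. Then p_{11} + p_{12}(e_i+e_j) + p_{22} e_i e_j = F(e_i,e_j)/(4(e_i−e_j)²). -/

import Mathlib

/-! Splitting the product over `Fin 5` as `{i, j}` and `{p, q, r}`, the statement becomes a
polynomial identity: for the quintic `4 (X - a)(X - b)(X - c)(X - d)(X - f)` one has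
`F(a, b) = 4 (a - b)² (a b (c + d + f) + c d f)`, which expansion of the coefficients confirms.
On the left the terms with `p₁₂` and `p₂₂` cancel. -/

open Finset Polynomial

def kleinPolar {R : Type*} [CommRing R] (lam : ℕ → R) (x z : R) : R :=
  ∑ k ∈ range 3, x ^ k * z ^ k * (2 * lam (2 * k) + lam (2 * k + 1) * (z + x))

theorem kleinPolar_coeff_at_roots {R : Type*} [CommRing R] (a b c d f : R) :
    kleinPolar (4 * ((X - C a) * (X - C b) * ((X - C c) * (X - C d) * (X - C f)))).coeff a b
      = 4 * (a - b) ^ 2 * (a * b * (c + d + f) + c * d * f) := by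
  have expand : (4 * ((X - C a) * (X - C b) * ((X - C c) * (X - C d) * (X - C f))) : R[X])
      = C 4 * X ^ 5 - C (4 * (a + b + c + d + f)) * X ^ 4
        + C (4 * (a*b + a*c + a*d + a*f + b*c + b*d + b*f + c*d + c*f + d*f)) * X ^ 3
        - C (4 * (a*b*c + a*b*d + a*b*f + a*c*d + a*c*f + a*d*f + b*c*d + b*c*f + b*d*f
            + c*d*f)) * X ^ 2
        + C (4 * (a*b*c*d + a*b*c*f + a*b*d*f + a*c*d*f + b*c*d*f)) * X
        - C (4 * (a*b*c*d*f)) := by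
    simp only [map_add, map_mul, map_ofNat]
    ring
  simp only [kleinPolar, expand, sum_range_succ, sum_range_zero, coeff_add, coeff_sub, coeff_C_mul,
    coeff_X_pow, coeff_C, coeff_X]
  norm_num
  ring

theorem prod_eq_mul_mul_of_card_eq_three {α M : Type*} [DecidableEq α] [CommMonoid M] {p q r : α}
    (h : ({p, q, r} : Finset α).card = 3) (g : α → M) :
    ∏ x ∈ {p, q, r}, g x = g p * g q * g r := by
  have hp : p ∉ ({q, r} : Finset α) := fun hp => by
    have := card_le_two (a := q) (b := r)
    rw [insert_eq_of_mem hp] at h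
    omega
  have hq : q ≠ r := fun hqr => by
    have := card_le_two (a := p) (b := q)
    simp only [hqr, insert_eq_of_mem (mem_singleton_self r)] at h this
    omega
  rw [prod_insert hp, prod_pair hq, mul_assoc]

theorem stmt_3 (e : Fin 5 → ℂ) (he : Function.Injective e)
    (lam : ℕ → ℂ)
    (hlam : ∀ k, lam k = (4 * ∏ m, (X - C (e m)) : Polynomial ℂ).coeff k)
    (F : ℂ → ℂ → ℂ)
    (hF : ∀ x z, F x z = ∑ k ∈ range 3, x^k * z^k * (2 * lam (2*k) + lam (2*k+1) * (z + x)))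
    (i j p q r : Fin 5) (hij : i ≠ j)
    (hpqr : ({p, q, r} : Finset (Fin 5)) = Finset.univ \ {i, j}) :
    (e i * e j * (e p + e q + e r) + e p * e q * e r)
      + (-(e i * e j)) * (e i + e j) + (e i + e j) * (e i * e j)
      = F (e i) (e j) / (4 * (e i - e j)^2) := by
  have hcard : ({p, q, r} : Finset (Fin 5)).card = 3 := by
    rw [hpqr, card_sdiff_of_subset (subset_univ _), card_pair hij, card_univ, Fintype.card_fin]
  have hprod : ∏ m, (X - C (e m))
      = (X - C (e i)) * (X - C (e j)) * ((X - C (e p)) * (X - C (e q)) * (X - C (e r))) := by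
    rw [← prod_sdiff (subset_univ {i, j}), ← hpqr, prod_eq_mul_mul_of_card_eq_three hcard,
      prod_pair hij, mul_comm]
  have hF_branch : F (e i) (e j)
      = 4 * (e i - e j) ^ 2 * (e i * e j * (e p + e q + e r) + e p * e q * e r) := by
    rw [hF, ← kleinPolar_coeff_at_roots, ← hprod, kleinPolar]
    simp only [hlam]
  have hne : (4 : ℂ) * (e i - e j) ^ 2 ≠ 0 := by
    simpa [sub_eq_zero] using he.ne hij
  rw [hF_branch, mul_div_cancel_left₀ _ hne]
  ring
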